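/- arXiv:math/0510524 — 2 statements merged into one kernel-verified Lean document; each statement's English description precedes it below -/
import Mathlib

section
/- For all integers m ≥ 1, k ≥ 1 and every real number x, Σ_{j=0}^{m} C(m,j) (q−1)^j E_{j,q}^{(0,k)}(x) = q^{mx} (1+q)^k / ∏_{i=0}^{k−1} (1 + q^{m−i}). -/
/-!
Multiplying `E_{j,q}^{(0,k)}(x)` by `(q - 1)^j` cancels its prefactor `(1 - q)^{-j}` up to the sign
`(-1)^j`, leaving `(1 + q)^k (-1)^j Σ_l C(j,l) a_l` with `a_l = (-1)^l q^{lx} / ∏_i (1 + q^{l-i})`.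
Summing against `C(m,j)` is then binomial inversion, `Σ_j (-1)^j C(m,j) C(j,l) = (-1)^m δ_{lm}`,
which leaves `(1 + q)^k (-1)^m a_m`.
-/

open Finset

/-- The q-number `[x]_q = (1 - q^x)/(1 - q)`, with `q^x = exp (x * log q)` (rpow). -/
noncomputable def qNum (q x : ℝ) : ℝ := (1 - q ^ x) / (1 - q)

/-- `[l]_{-q} = (1 - (-q)^l)/(1 + q)` for a natural number `l`. -/
noncomputable def qNumNeg (q : ℝ) (l : ℕ) : ℝ := (1 - (-q) ^ l) / (1 + q)

/-- The higher-order q-Euler polynomial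
`E_{m,q}^{(h,k)}(x) = ((1+q)^k/(1-q)^m) * Σ_{j=0}^m C(m,j) (-1)^j q^{jx} / Π_{i=0}^{k-1} (1 + q^{h+j-i})`. -/
noncomputable def qE (q : ℝ) (h : ℤ) (k m : ℕ) (x : ℝ) : ℝ :=
  ((1 + q) ^ k / (1 - q) ^ m) *
    ∑ j ∈ Finset.range (m + 1),
      (m.choose j : ℝ) * (-1) ^ j * q ^ ((j : ℝ) * x) /
        ∏ i ∈ Finset.range k, (1 + q ^ ((h : ℝ) + (j : ℝ) - (i : ℝ)))

theorem sum_neg_one_pow_mul_choose_mul_choose {R : Type*} [CommRing R] (m l : ℕ) :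
    ∑ j ∈ range (m + 1), (-1 : R) ^ j * m.choose j * j.choose l
      = if l = m then (-1) ^ m else 0 := by
  rcases lt_or_ge m l with hml | hlm
  · rw [if_neg hml.ne']
    refine sum_eq_zero fun j hj => ?_
    rw [Nat.choose_eq_zero_of_lt (n := j) (k := l) (by grind), Nat.cast_zero, mul_zero]
  obtain ⟨n, rfl⟩ := Nat.exists_eq_add_of_le hlm
  have below_l : ∑ j ∈ range l, (-1 : R) ^ j * (l + n).choose j * j.choose l = 0 :=
    sum_eq_zero fun j hj => by
      rw [Nat.choose_eq_zero_of_lt (mem_range.mp hj), Nat.cast_zero, mul_zero]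
  have shifted (t : ℕ) : (-1 : R) ^ (l + t) * (l + n).choose (l + t) * (l + t).choose l
      = (-1) ^ l * (l + n).choose l * ((-1) ^ t * n.choose t) := by
    have := Nat.choose_mul (n := l + n) (k := l + t) (s := l) (Nat.le_add_right l t)
    rw [Nat.add_sub_cancel_left, Nat.add_sub_cancel_left] at this
    rw [pow_add, mul_assoc _ ((l + n).choose (l + t) : R), ← Nat.cast_mul, this, Nat.cast_mul]
    ring
  have alternating : ∑ t ∈ range (n + 1), (-1 : R) ^ t * n.choose t = if n = 0 then 1 else 0 := by
    simpa using congrArg (Int.cast : ℤ → R) (Int.alternating_sum_range_choose (n := n))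
  rw [show l + n + 1 = l + (n + 1) by ring, sum_range_add, below_l, zero_add]
  simp only [shifted, ← mul_sum, alternating, Nat.left_eq_add]
  split_ifs with hn
  · simp [hn]
  · rw [mul_zero]

theorem sum_neg_one_pow_mul_choose_mul_sum_choose {R : Type*} [CommRing R] (a : ℕ → R) (m : ℕ) :
    ∑ j ∈ range (m + 1), (-1 : R) ^ j * m.choose j * ∑ l ∈ range (j + 1), j.choose l * a l
      = (-1) ^ m * a m := by
  have extend : ∀ j ∈ range (m + 1), ∑ l ∈ range (j + 1), (j.choose l : R) * a l
      = ∑ l ∈ range (m + 1), (j.choose l : R) * a l := fun j hj =>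
    sum_subset (range_subset_range.mpr (by grind)) fun l _ hl => by
      rw [Nat.choose_eq_zero_of_lt (by grind), Nat.cast_zero, zero_mul]
  rw [sum_congr rfl fun j hj => by rw [extend j hj]]
  simp_rw [mul_sum, ← mul_assoc]
  rw [sum_comm]
  simp_rw [← sum_mul, sum_neg_one_pow_mul_choose_mul_choose, ite_mul, zero_mul]
  rw [sum_ite_eq', if_pos (self_mem_range_succ m)]

theorem sub_one_pow_mul_qE_zero {q : ℝ} (hq1 : q ≠ 1) (k j : ℕ) (x : ℝ) :
    (q - 1) ^ j * qE q 0 k j x = (1 + q) ^ k * ((-1) ^ j * ∑ l ∈ range (j + 1), j.choose l *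
      ((-1) ^ l * (q ^ ((l : ℝ) * x) / ∏ i ∈ range k, (1 + q ^ ((l : ℝ) - i))))) := by
  have h1q : 1 - q ≠ 0 := sub_ne_zero.mpr hq1.symm
  have prefactor : (q - 1) ^ j * ((1 + q) ^ k / (1 - q) ^ j) = (1 + q) ^ k * (-1) ^ j := by
    rw [show q - 1 = -1 * (1 - q) by ring, mul_pow]
    field_simp
  simp only [qE, Int.cast_zero, zero_add, mul_div_assoc, mul_assoc]
  rw [← mul_assoc, prefactor, mul_assoc]

theorem stmt_1_general (q : ℝ) (hq1 : q ≠ 1) (m k : ℕ)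
    (x : ℝ) :
    ∑ j ∈ Finset.range (m + 1), (m.choose j : ℝ) * (q - 1) ^ j * qE q 0 k j x
      = q ^ ((m : ℝ) * x) * (1 + q) ^ k /
          ∏ i ∈ Finset.range k, (1 + q ^ ((m : ℝ) - (i : ℝ))) := by
  calc ∑ j ∈ range (m + 1), (m.choose j : ℝ) * (q - 1) ^ j * qE q 0 k j x
      = (1 + q) ^ k * ∑ j ∈ range (m + 1), (-1) ^ j * m.choose j * ∑ l ∈ range (j + 1),
          j.choose l * ((-1) ^ l * (q ^ ((l : ℝ) * x) / ∏ i ∈ range k, (1 + q ^ ((l : ℝ) - i)))) := by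
        rw [mul_sum]
        refine sum_congr rfl fun j _ => ?_
        rw [mul_assoc, sub_one_pow_mul_qE_zero hq1]
        ring
    _ = (1 + q) ^ k * ((-1) ^ m * ((-1) ^ m *
          (q ^ ((m : ℝ) * x) / ∏ i ∈ range k, (1 + q ^ ((m : ℝ) - i))))) := by
        rw [sum_neg_one_pow_mul_choose_mul_sum_choose]
    _ = _ := by
        rw [← mul_assoc ((-1) ^ m), ← mul_pow, neg_one_mul, neg_neg, one_pow]
        ring

theorem stmt_1 (q : ℝ) (hq : 0 < q) (hq1 : q ≠ 1) (m k : ℕ) (hm : 1 ≤ m) (hk : 1 ≤ k)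
    (x : ℝ) :
    ∑ j ∈ Finset.range (m + 1), (m.choose j : ℝ) * (q - 1) ^ j * qE q 0 k j x
      = q ^ ((m : ℝ) * x) * (1 + q) ^ k /
          ∏ i ∈ Finset.range k, (1 + q ^ ((m : ℝ) - (i : ℝ))) :=
  stmt_1_general q hq1 m k x
end

section
/- (Theorem 7.) For every integer k ≥ 2, every integer m ≥ 0 and every real number x, E_{m,q}^{(k,k)}(x) = Σ_{j=0}^{m} C(m,j) q^{jx} E_{m−j,q}^{(k+j,1)}(x) · E_{j,q}^{(k−1,k−1)}. -/
open Finset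

/-!
Each q-Euler polynomial is `(1+q)^k/(1-q)^m` times the binomial transform
`T f m = ∑ C(m,j) (-1)^j f j` of its weight `q^{jx} / ∏_{i<k} (1 + q^{h+j-i})`. Splitting off
the factor `i = 0`, the weight of order `(k,k)` is the weight of order `(k,1)` times the weight of
order `(k-1,k-1)` at `x = 0`, so the theorem is an instance of the product rule
`T (a b) m = ∑ C(m,j) T (a (j + ·)) (m-j) T b j`. That rule follows from `T ∘ T = id`, which is
Newton's forward-difference formula.
-/

section BinomialTransform

variable {R : Type*} [CommRing R]

def binomialTransform (f : ℕ → R) (n : ℕ) : R :=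
  ∑ k ∈ range (n + 1), (n.choose k : R) * (-1) ^ k * f k

lemma neg_one_pow_mul_self (k : ℕ) : (-1 : R) ^ k * (-1) ^ k = 1 := by
  rw [← mul_pow, neg_one_mul, neg_neg, one_pow]

lemma binomialTransform_eq_neg_one_pow_mul_fwdDiff_iter (f : ℕ → R) (n : ℕ) :
    binomialTransform f n = (-1) ^ n * (fwdDiff 1)^[n] f 0 := by
  rw [fwdDiff_iter_eq_sum_shift, binomialTransform, mul_sum]
  refine sum_congr rfl fun k hk => ?_
  obtain ⟨d, rfl⟩ := Nat.exists_eq_add_of_le (mem_range_succ_iff.mp hk)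
  simp only [Nat.add_sub_cancel_left, zsmul_eq_mul, smul_eq_mul, mul_one, zero_add, pow_add]
  push_cast
  linear_combination (-((k + d).choose k : R) * (-1) ^ k * f k) * neg_one_pow_mul_self (R := R) d

lemma binomialTransform_binomialTransform (f : ℕ → R) :
    binomialTransform (binomialTransform f) = f := by
  funext n
  have newton := shift_eq_sum_fwdDiff_iter 1 f n 0
  simp only [zero_add, smul_eq_mul, mul_one, nsmul_eq_mul] at newton
  rw [newton, binomialTransform]
  refine sum_congr rfl fun k _ => ?_
  rw [binomialTransform_eq_neg_one_pow_mul_fwdDiff_iter]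
  linear_combination ((n.choose k : R) * (fwdDiff 1)^[k] f 0) * neg_one_pow_mul_self (R := R) k

lemma mul_binomialTransform (c : R) (f : ℕ → R) (n : ℕ) :
    c * binomialTransform f n = binomialTransform (fun k => c * f k) n := by
  simp only [binomialTransform, mul_sum]
  exact sum_congr rfl fun _ _ => by ring

lemma binomialTransform_mul (a b : ℕ → R) (m : ℕ) :
    binomialTransform (fun n => a n * b n) m =
      ∑ j ∈ range (m + 1),
        (m.choose j : R) * binomialTransform (fun l => a (j + l)) (m - j) *
          binomialTransform b j := by
  -- reindex the double sum by `n = j + l`; the inner sum over `j` is then `T (T b) n = b n`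
  set F : ℕ → ℕ → R := fun j l =>
    (m.choose j : R) * (m - j).choose l * (-1) ^ l * a (j + l) * binomialTransform b j
  have inner (n : ℕ) (hn : n ≤ m) : ∑ j ∈ range (n + 1), F j (n - j) =
      (m.choose n : R) * (-1) ^ n * (a n * b n) := by
    rw [← congr_fun (binomialTransform_binomialTransform b) n, binomialTransform, mul_sum,
      mul_sum]
    refine sum_congr rfl fun j hj => ?_
    obtain ⟨d, rfl⟩ := Nat.exists_eq_add_of_le (mem_range_succ_iff.mp hj)
    have hchoose : (m.choose j : R) * (m - j).choose d = m.choose (j + d) * (j + d).choose j := by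
      have := Nat.choose_mul (n := m) (Nat.le_add_right j d)
      rw [Nat.add_sub_cancel_left] at this
      exact_mod_cast congrArg (Nat.cast : ℕ → R) this.symm
    simp only [F, Nat.add_sub_cancel_left, pow_add]
    linear_combination (-1) ^ d * a (j + d) * binomialTransform b j * hchoose -
      (m.choose (j + d) : R) * (j + d).choose j * (-1) ^ d * a (j + d) * binomialTransform b j *
        neg_one_pow_mul_self (R := R) j
  calc binomialTransform (fun n => a n * b n) m
      = ∑ n ∈ range (m + 1), ∑ j ∈ range (n + 1), F j (n - j) :=
        sum_congr rfl fun n hn => (inner n (mem_range_succ_iff.mp hn)).symm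
    _ = ∑ j ∈ range (m + 1), ∑ l ∈ range (m + 1 - j), F j l := sum_range_diag_flip _ F
    _ = _ := sum_congr rfl fun j hj => by
        rw [Nat.sub_add_comm (mem_range_succ_iff.mp hj), binomialTransform, mul_sum, sum_mul]
        exact sum_congr rfl fun l _ => by ring

end BinomialTransform

noncomputable def qEulerTerm (q : ℝ) (h : ℤ) (k : ℕ) (x : ℝ) (j : ℕ) : ℝ :=
  q ^ ((j : ℝ) * x) / ∏ i ∈ range k, (1 + q ^ ((h : ℝ) + j - i))

lemma qE_eq_binomialTransform (q : ℝ) (h : ℤ) (k m : ℕ) (x : ℝ) :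
    qE q h k m x = (1 + q) ^ k / (1 - q) ^ m * binomialTransform (qEulerTerm q h k x) m := by
  simp only [qE, binomialTransform, qEulerTerm, mul_div_assoc]

lemma qEulerTerm_eq_qEulerTerm_one_mul (q : ℝ) (h : ℤ) {k : ℕ} (hk : 0 < k) (x : ℝ)
    (n : ℕ) :
    qEulerTerm q h k x n = qEulerTerm q h 1 x n * qEulerTerm q (h - 1) (k - 1) 0 n := by
  obtain ⟨k, rfl⟩ := Nat.exists_eq_succ_of_ne_zero hk.ne'
  rw [qEulerTerm, qEulerTerm, qEulerTerm, prod_range_succ', prod_range_one]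
  simp only [Nat.succ_sub_one, Nat.cast_zero, mul_zero, Real.rpow_zero, div_mul_div_comm, mul_one]
  push_cast
  ring_nf

lemma rpow_mul_qEulerTerm {q : ℝ} (hq : 0 < q) (h : ℤ) (k : ℕ) (x : ℝ) (j l : ℕ) :
    q ^ ((j : ℝ) * x) * qEulerTerm q (h + j) k x l = qEulerTerm q h k x (j + l) := by
  rw [qEulerTerm, qEulerTerm, ← mul_div_assoc, ← Real.rpow_add hq]
  push_cast
  ring_nf

theorem stmt_15_general (q : ℝ) (hq : 0 < q) (k : ℕ) (hk : 2 ≤ k) (m : ℕ) (x : ℝ) :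
    qE q k k m x =
      ∑ j ∈ Finset.range (m + 1),
        (m.choose j : ℝ) * q ^ ((j : ℝ) * x) * qE q ((k : ℤ) + j) 1 (m - j) x *
          qE q ((k : ℤ) - 1) (k - 1) j 0 := by
  have hk0 : 0 < k := by omega
  have hsplit : qEulerTerm q k k x =
      fun n => qEulerTerm q k 1 x n * qEulerTerm q (k - 1) (k - 1) 0 n :=
    funext (qEulerTerm_eq_qEulerTerm_one_mul q k hk0 x)
  rw [qE_eq_binomialTransform, hsplit, binomialTransform_mul, mul_sum]
  refine sum_congr rfl fun j hj => ?_
  have hscale : (1 + q) ^ k / (1 - q) ^ m =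
      (1 + q) / (1 - q) ^ (m - j) * ((1 + q) ^ (k - 1) / (1 - q) ^ j) := by
    rw [div_mul_div_comm, ← pow_succ', Nat.sub_add_cancel hk0, ← pow_add,
      Nat.sub_add_cancel (mem_range_succ_iff.mp hj)]
  have hshift : binomialTransform (fun l => qEulerTerm q k 1 x (j + l)) (m - j) =
      q ^ ((j : ℝ) * x) * binomialTransform (qEulerTerm q (k + j) 1 x) (m - j) := by
    simp_rw [mul_binomialTransform, rpow_mul_qEulerTerm hq]
  rw [qE_eq_binomialTransform, qE_eq_binomialTransform, pow_one, hshift, hscale]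
  ring

theorem stmt_15 (q : ℝ) (hq : 0 < q) (hq1 : q ≠ 1) (k : ℕ) (hk : 2 ≤ k) (m : ℕ) (x : ℝ) :
    qE q k k m x =
      ∑ j ∈ Finset.range (m + 1),
        (m.choose j : ℝ) * q ^ ((j : ℝ) * x) * qE q ((k : ℤ) + j) 1 (m - j) x *
          qE q ((k : ℤ) - 1) (k - 1) j 0 :=
  stmt_15_general q hq k hk m x
end
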